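/- arXiv:2010.14891 — 5 statements merged into one kernel-verified Lean document; each statement's English description precedes it below -/
import Mathlib

section
/- Let P be a complete lattice and f : P → P a monotone function. Define the transfinite iteration f^0(⊥) = ⊥ and f^α(⊥) = ⨆_{β < α} f(f^β(⊥)). Then for any ordinal γ whose cardinality exceeds the cardinality of P, f^γ(⊥) equals the least fixed point of f. -/
/-- Transfinite lower iteration: `lowIter f 0 = ⊥` and
`lowIter f α = ⨆_{β < α} f (lowIter f β)`. -/
noncomputable def lowIter {P : Type*} [CompleteLattice P] (f : P → P) (α : Ordinal) : P :=
  ⨆ β : {β : Ordinal // β < α}, f (lowIter f β)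
termination_by α
decreasing_by exact β.2

theorem lowIter_mono {P : Type*} [CompleteLattice P] (f : P → P) :
    Monotone (lowIter f) := by
  intro α α' h
  rw [lowIter, lowIter]
  exact iSup_le fun β => le_iSup_of_le ⟨β.1, lt_of_lt_of_le β.2 h⟩ le_rfl

theorem lowIter_le_lfp {P : Type*} [CompleteLattice P] (f : P → P) (hf : Monotone f)
    (α : Ordinal) : lowIter f α ≤ OrderHom.lfp ⟨f, hf⟩ := by
  induction α using Ordinal.induction with
  | h α IH =>
    rw [lowIter]
    refine iSup_le fun β => ?_
    calc f (lowIter f β.1) ≤ f (OrderHom.lfp ⟨f, hf⟩) := hf (IH β.1 β.2)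
      _ = _ := OrderHom.map_lfp ⟨f, hf⟩

theorem f_lowIter_le_succ {P : Type*} [CompleteLattice P] (f : P → P) (α : Ordinal) :
    f (lowIter f α) ≤ lowIter f (α + 1) := by
  conv_rhs => rw [lowIter]
  exact le_iSup (fun β : {β : Ordinal // β < α + 1} => f (lowIter f β.1))
    ⟨α, by rw [Ordinal.add_one_eq_succ]; exact Order.lt_succ α⟩

universe u in
theorem exists_stable {P : Type u} [CompleteLattice P] (f : P → P)
    (γ : Ordinal.{u}) (hγ : Cardinal.mk P < γ.card) :
    ∃ α, α < γ ∧ f (lowIter f α) ≤ lowIter f α := by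
    by_contra hc
    push_neg at hc
    have sm : StrictMono (fun β : {β : Ordinal // β < γ} => lowIter f β.1) := by
      intro a b hab
      have h1 : lowIter f a.1 < lowIter f (a.1 + 1) := by
        refine lt_of_le_of_ne (lowIter_mono f le_self_add) fun he => ?_
        have hle := f_lowIter_le_succ f a.1
        rw [← he] at hle
        exact hc a.1 a.2 hle
      have h2 : lowIter f (a.1 + 1) ≤ lowIter f b.1 := by
        refine lowIter_mono f ?_
        rw [Ordinal.add_one_eq_succ]
        exact Order.succ_le_of_lt hab
      exact h1.trans_le h2
    have hemb : Nonempty ({β : Ordinal.{u} // β < γ} ↪ P) := ⟨⟨_, sm.injective⟩⟩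
    have h : Cardinal.lift.{u} (Cardinal.mk {β : Ordinal.{u} // β < γ})
        ≤ Cardinal.lift.{u + 1} (Cardinal.mk P) := Cardinal.lift_mk_le'.mpr hemb
    have hIio : Cardinal.mk {β : Ordinal.{u} // β < γ} = Cardinal.lift.{u + 1} γ.card := by
      simp only [← Ordinal.mk_Iio_ordinal γ]; rfl
    rw [hIio, Cardinal.lift_lift, Cardinal.lift_le] at h
    exact absurd h hγ.not_ge

theorem lowIter_eq_lfp {P : Type*} [CompleteLattice P] (f : P → P) (hf : Monotone f)
    (γ : Ordinal) (hγ : Cardinal.mk P < γ.card) :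
    lowIter f γ = OrderHom.lfp ⟨f, hf⟩ := by
  obtain ⟨α, hαγ, hα⟩ := exists_stable f γ hγ
  refine le_antisymm (lowIter_le_lfp f hf γ) ?_
  calc OrderHom.lfp ⟨f, hf⟩ ≤ lowIter f α := OrderHom.lfp_le ⟨f, hf⟩ hα
    _ ≤ lowIter f γ := lowIter_mono f hαγ.le
end

section
/- Let P be a complete lattice and let F : (ℕ → P) → (ℕ → P) be defined by F(v)(n) = p(n) ⊓ v(n+1), where p : ℕ → P is fixed. Then F is monotone on the complete lattice ℕ → P (pointwise order), and its greatest fixed point w satisfies w(n) = ⨅_{m ≥ n} p(m) for every n. -/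
theorem gfp_forall_encoding {P : Type*} [CompleteLattice P] (p : ℕ → P) :
    ∃ hF : Monotone (fun v : ℕ → P => fun n => p n ⊓ v (n + 1)),
      ∀ n, OrderHom.gfp ⟨fun v : ℕ → P => fun n => p n ⊓ v (n + 1), hF⟩ n
        = ⨅ m ≥ n, p m := by
  have hF : Monotone (fun v : ℕ → P => fun n => p n ⊓ v (n + 1)) := by
    intro u v huv n
    exact inf_le_inf_left _ (huv _)
  refine ⟨hF, ?_⟩
  set F : (ℕ → P) →o (ℕ → P) := ⟨fun v : ℕ → P => fun n => p n ⊓ v (n + 1), hF⟩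
  set g := OrderHom.gfp F with hg
  have hfix : F g = g := OrderHom.map_gfp F
  have hfixn : ∀ n, g n = p n ⊓ g (n + 1) := fun n => (congrFun hfix n).symm
  set w : ℕ → P := fun n => ⨅ m ≥ n, p m with hw
  have hwfix : w ≤ F w := by
    intro n
    apply le_inf
    · exact iInf₂_le n le_rfl
    · exact le_iInf₂ fun m hm => iInf₂_le m (by omega)
  have h1 : w ≤ g := OrderHom.le_gfp F hwfix
  have h2 : g ≤ w := by
    have key : ∀ k n, g n ≤ p (n + k) := by
      intro k
      induction k with
      | zero => intro n; rw [hfixn n]; simpa using inf_le_left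
      | succ k ih =>
          intro n
          have := (hfixn n).le.trans (inf_le_right.trans (ih (n + 1)))
          simpa [Nat.add_assoc, Nat.add_comm 1 k] using this
    intro n
    refine le_iInf₂ fun m hm => ?_
    have := key (m - n) n
    rwa [Nat.add_sub_cancel' hm] at this
  intro n
  exact le_antisymm (h2 n) (h1 n)
end

section
/- Let P be a complete lattice and let F : (ℕ → P) → (ℕ → P) be defined by F(v)(n) = p(n) ⊔ v(n+1), where p : ℕ → P is fixed. Then F is monotone, and its least fixed point w satisfies w(n) = ⨆_{m ≥ n} p(m) for every n. -/
theorem lfp_exists_encoding {P : Type*} [CompleteLattice P] (p : ℕ → P) :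
    ∃ hF : Monotone (fun v : ℕ → P => fun n => p n ⊔ v (n + 1)),
      ∀ n, OrderHom.lfp ⟨fun v : ℕ → P => fun n => p n ⊔ v (n + 1), hF⟩ n
        = ⨆ m ≥ n, p m := by
  have hF : Monotone (fun v : ℕ → P => fun n => p n ⊔ v (n + 1)) := by
    intro u v huv n
    exact sup_le_sup_left (huv (n + 1)) _
  refine ⟨hF, ?_⟩
  set F : (ℕ → P) →o (ℕ → P) := ⟨fun v : ℕ → P => fun n => p n ⊔ v (n + 1), hF⟩
  set w : ℕ → P := fun n => ⨆ m ≥ n, p m with hw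
  have hfix : F.lfp = F F.lfp := (OrderHom.map_lfp F).symm
  have hle : F.lfp ≤ w := by
    apply OrderHom.lfp_le
    intro n
    apply sup_le
    · exact le_biSup _ (le_refl n)
    · apply iSup_le; intro m; apply iSup_le; intro hm
      exact le_biSup _ (Nat.le_of_succ_le hm)
  have hge : w ≤ F.lfp := by
    intro n
    apply iSup_le; intro m; apply iSup_le; intro hm
    -- show p m ≤ F.lfp n for n ≤ m, by induction on m - n
    have key : ∀ k n, p (n + k) ≤ F.lfp n := by
      intro k
      induction k with
      | zero => intro n; rw [congrFun hfix n]; exact le_sup_left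
      | succ k ih =>
        intro n
        rw [congrFun hfix n]
        have := ih (n + 1)
        calc p (n + (k + 1)) = p (n + 1 + k) := by ring_nf
        _ ≤ F.lfp (n + 1) := ih (n + 1)
        _ ≤ p n ⊔ F.lfp (n + 1) := le_sup_right
    have : p m ≤ F.lfp n := by
      have := key (m - n) n
      rwa [Nat.add_sub_cancel' hm] at this
    exact this
  intro n
  exact congrFun (le_antisymm hle hge) n
end

section
/- Fix a natural number t and define L : (ℕ → Prop) → (ℕ → Prop) by L(X)(y) := (y + 1 = t) ∨ X (y + 1). Then L is monotone, and its least fixed point lt satisfies: lt s ↔ s < t, for all natural numbers s. -/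
theorem lfp_lt_encoding (t : ℕ) :
    ∃ hL : Monotone (fun X : ℕ → Prop => fun y => (y + 1 = t) ∨ X (y + 1)),
      ∀ s : ℕ, OrderHom.lfp ⟨fun X : ℕ → Prop => fun y => (y + 1 = t) ∨ X (y + 1), hL⟩ s
        ↔ s < t := by
  have hL : Monotone (fun X : ℕ → Prop => fun y => (y + 1 = t) ∨ X (y + 1)) := by
    intro X Y hXY y h
    exact h.imp id (fun hx => hXY _ hx)
  refine ⟨hL, fun s => ?_⟩
  set f : (ℕ → Prop) →o (ℕ → Prop) := ⟨fun X : ℕ → Prop => fun y => (y + 1 = t) ∨ X (y + 1), hL⟩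
  have hfix : f (OrderHom.lfp f) = OrderHom.lfp f := OrderHom.map_lfp f
  constructor
  · intro h
    have hle : OrderHom.lfp f ≤ fun s => s < t := by
      apply OrderHom.lfp_le
      intro y hy
      rcases hy with h1 | h2
      · omega
      · omega
    exact hle s h
  · intro h
    obtain ⟨k, hk⟩ : ∃ k, s + 1 + k = t := ⟨t - (s+1), by omega⟩
    clear h
    induction k generalizing s with
    | zero =>
      rw [← hfix]
      exact Or.inl (by omega)
    | succ n ih =>
      rw [← hfix]
      exact Or.inr (ih (s+1) (by omega))
end

section
/- Let f : List ℕ → Prop, and define the monotone operator Ψ on the complete lattice of predicates (List ℕ → Prop) by Ψ(V)(z) := f z ∨ (∀ i, V (z ++ [i])). Then lfp Ψ applied to the empty list holds if and only if the tree whose 'dead' nodes are given by f is well-founded, i.e., every infinite sequence s : ℕ → ℕ has some finite prefix p with f p. -/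
theorem lfp_wellfoundedness_encoding (f : List ℕ → Prop) :
    ∃ hΨ : Monotone (fun V : List ℕ → Prop => fun z => f z ∨ ∀ i, V (z ++ [i])),
      (OrderHom.lfp ⟨fun V : List ℕ → Prop => fun z => f z ∨ ∀ i, V (z ++ [i]), hΨ⟩ []
        ↔ ∀ s : ℕ → ℕ, ∃ n, f (List.map s (List.range n))) := by
  have hΨ : Monotone (fun V : List ℕ → Prop => fun z => f z ∨ ∀ i, V (z ++ [i])) := by
    intro V W h z hz
    rcases hz with h1 | h2
    · exact Or.inl h1
    · exact Or.inr fun i => h _ (h2 i)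
  set Ψ : (List ℕ → Prop) →o (List ℕ → Prop) :=
    ⟨fun V : List ℕ → Prop => fun z => f z ∨ ∀ i, V (z ++ [i]), hΨ⟩ with hΨdef
  refine ⟨hΨ, ?_, ?_⟩
  · intro hl s
    have hP : OrderHom.lfp Ψ ≤
        fun z => ∀ s : ℕ → ℕ, ∃ n, f (z ++ List.map s (List.range n)) := by
      apply OrderHom.lfp_le
      intro z hz s
      rcases hz with h1 | h2
      · exact ⟨0, by simpa using h1⟩
      · obtain ⟨n, hn⟩ := h2 (s 0) (fun k => s (k + 1))
        refine ⟨n + 1, ?_⟩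
        have hr : List.map s (List.range (n + 1))
            = s 0 :: List.map (fun k => s (k + 1)) (List.range n) := by
          rw [List.range_succ_eq_map]
          simp [List.map_map, Function.comp]
        rw [hr]
        simpa using hn
    obtain ⟨n, hn⟩ := hP _ hl s
    exact ⟨n, by simpa using hn⟩
  · intro hwf
    by_contra hl
    set L := OrderHom.lfp Ψ with hLdef
    have hfix : ∀ z, L z ↔ (f z ∨ ∀ i, L (z ++ [i])) := by
      intro z
      exact Iff.of_eq (congrFun (OrderHom.map_lfp Ψ) z).symm
    have step : ∀ z, ¬ L z → ∃ i, ¬ L (z ++ [i]) := by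
      intro z hz
      by_contra h
      push_neg at h
      exact hz ((hfix z).2 (Or.inr fun i => h i))
    have hnf : ∀ z, ¬ L z → ¬ f z := fun z hz hf => hz ((hfix z).2 (Or.inl hf))
    choose g hg using step
    let p : ℕ → {z : List ℕ // ¬ L z} := fun n =>
      Nat.rec ⟨[], hl⟩ (fun _ q => ⟨q.1 ++ [g q.1 q.2], hg q.1 q.2⟩) n
    let s : ℕ → ℕ := fun n => g (p n).1 (p n).2
    have hp : ∀ n, (p n).1 = List.map s (List.range n) := by
      intro n
      induction n with
      | zero => simp [p]
      | succ n ih =>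
        have h1 : (p (n + 1)).1 = (p n).1 ++ [s n] := rfl
        rw [h1, ih, List.range_succ, List.map_append]
        simp
    obtain ⟨n, hn⟩ := hwf s
    exact hnf (p n).1 (p n).2 (by rw [hp n]; exact hn)
end
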